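/- arXiv:2507.11366 — 12 statements merged into one kernel-verified Lean document; each statement's English description precedes it below -/
import Mathlib

section
/- For alternating gradient descent in a zero-sum game, the perturbed energy h₋^t = ‖x^t - x*‖²/η₁ + ‖y^t - y*‖²/η₂ + ⟨x^t, A y^t - b1⟩ + ⟨y^t, b2⟩ is time-invariant: h₋^{t+1} = h₋^t for all t, and hence h₋^t = h₋^0 for all t ≥ 0. -/
open Matrix

/-- The perturbed energy for zero-sum games. -/
noncomputable def hminus {k : ℕ} (A : Matrix (Fin k) (Fin k) ℝ)
    (b1 b2 xs ys : Fin k → ℝ) (η1 η2 : ℝ) (x y : Fin k → ℝ) : ℝ :=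
  (x - xs) ⬝ᵥ (x - xs) / η1 + (y - ys) ⬝ᵥ (y - ys) / η2 +
    x ⬝ᵥ (A.mulVec y - b1) + y ⬝ᵥ b2

lemma key_transp {k : ℕ} (A : Matrix (Fin k) (Fin k) ℝ) (a b : Fin k → ℝ) :
    a ⬝ᵥ Aᵀ.mulVec b = b ⬝ᵥ A.mulVec a := by
  rw [Matrix.mulVec_transpose, dotProduct_comm, ← Matrix.dotProduct_mulVec]

lemma hminus_step {k : ℕ} (A : Matrix (Fin k) (Fin k) ℝ)
    (b1 b2 : Fin k → ℝ) (η1 η2 : ℝ) (hη1 : η1 ≠ 0) (hη2 : η2 ≠ 0)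
    (xs ys : Fin k → ℝ) (hxs : -(Aᵀ.mulVec xs) = b2) (hys : A.mulVec ys = b1)
    (xt yt : Fin k → ℝ) :
    hminus A b1 b2 xs ys η1 η2 (xt + η1 • (A.mulVec yt - b1))
      (yt + η2 • (-(Aᵀ.mulVec (xt + η1 • (A.mulVec yt - b1))) - b2)) =
    hminus A b1 b2 xs ys η1 η2 xt yt := by
  subst hxs hys
  set u : Fin k → ℝ := xt - xs with hu
  set v : Fin k → ℝ := yt - ys with hv
  set g : Fin k → ℝ := A.mulVec v with hg
  set u' : Fin k → ℝ := u + η1 • g with hu'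
  set w : Fin k → ℝ := Aᵀ.mulVec u' with hw
  set v' : Fin k → ℝ := v - η2 • w with hv'
  have hx' : xt + η1 • (A.mulVec yt - A.mulVec ys) = u' + xs := by
    rw [hu', hu, hg, hv, ← Matrix.mulVec_sub]; abel
  rw [hx']
  have hy' : yt + η2 • (-(Aᵀ.mulVec (u' + xs)) - -(Aᵀ.mulVec xs)) = v' + ys := by
    rw [hv', hw, Matrix.mulVec_add]
    have : -(Aᵀ.mulVec u' + Aᵀ.mulVec xs) - -(Aᵀ.mulVec xs) = -(Aᵀ.mulVec u') := by abel
    rw [this, hv]; simp [smul_neg]; abel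
  rw [hy']
  -- reduce hminus to the centered form
  have form3 : ∀ x y : Fin k → ℝ,
      x ⬝ᵥ (A.mulVec y - A.mulVec ys) + y ⬝ᵥ (-(Aᵀ.mulVec xs)) =
      (x - xs) ⬝ᵥ A.mulVec (y - ys) - (A.mulVec ys) ⬝ᵥ xs := by
    intro x y
    rw [dotProduct_neg, key_transp]
    simp only [Matrix.mulVec_sub, sub_dotProduct, dotProduct_sub]
    rw [dotProduct_comm (A.mulVec ys) xs]
    ring
  unfold hminus
  have hsub1 : u' + xs - xs = u' := by abel
  have hsub2 : v' + ys - ys = v' := by abel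
  have f1 : (u' + xs) ⬝ᵥ (A.mulVec (v' + ys) - A.mulVec ys) +
      (v' + ys) ⬝ᵥ (-(Aᵀ.mulVec xs)) =
      u' ⬝ᵥ A.mulVec v' - (A.mulVec ys) ⬝ᵥ xs := by
    rw [form3, hsub1, hsub2]
  have f2 : xt ⬝ᵥ (A.mulVec yt - A.mulVec ys) + yt ⬝ᵥ (-(Aᵀ.mulVec xs)) =
      u ⬝ᵥ g - (A.mulVec ys) ⬝ᵥ xs := by
    rw [form3, ← hu, ← hv, ← hg]
  rw [hsub1, hsub2]
  have hug : u' ⬝ᵥ g = u ⬝ᵥ g + η1 * (g ⬝ᵥ g) := by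
    rw [hu', add_dotProduct, smul_dotProduct, smul_eq_mul]
  have e1 : u' ⬝ᵥ u' = u ⬝ᵥ u + 2 * η1 * (u ⬝ᵥ g) + η1 ^ 2 * (g ⬝ᵥ g) := by
    simp only [hu', add_dotProduct, dotProduct_add, smul_dotProduct,
      dotProduct_smul, smul_eq_mul]
    rw [dotProduct_comm g u]
    ring
  have hvw : v ⬝ᵥ w = u ⬝ᵥ g + η1 * (g ⬝ᵥ g) := by
    rw [hw, key_transp, ← hg, hug]
  have e2 : v' ⬝ᵥ v' = v ⬝ᵥ v - 2 * η2 * (u ⬝ᵥ g + η1 * (g ⬝ᵥ g))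
      + η2 ^ 2 * (w ⬝ᵥ w) := by
    simp only [hv', sub_dotProduct, dotProduct_sub, smul_dotProduct,
      dotProduct_smul, smul_eq_mul]
    rw [dotProduct_comm w v, hvw]
    ring
  have huw : u' ⬝ᵥ A.mulVec w = w ⬝ᵥ w := by
    rw [← key_transp, ← hw]
  have e3 : u' ⬝ᵥ A.mulVec v' = u ⬝ᵥ g + η1 * (g ⬝ᵥ g) - η2 * (w ⬝ᵥ w) := by
    rw [hv', Matrix.mulVec_sub, Matrix.mulVec_smul, dotProduct_sub,
      dotProduct_smul, smul_eq_mul, ← hg, hug, huw]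
  rw [← hu, ← hv]
  have main : u' ⬝ᵥ u' / η1 + v' ⬝ᵥ v' / η2 + u' ⬝ᵥ A.mulVec v' =
      u ⬝ᵥ u / η1 + v ⬝ᵥ v / η2 + u ⬝ᵥ g := by
    rw [e1, e2, e3]
    field_simp
    ring
  linear_combination main + f1 - f2

/-- Zero-sum alternating GD: the perturbed energy h₋ is time-invariant. -/
theorem zero_sum_energy_invariant {k : ℕ} (A : Matrix (Fin k) (Fin k) ℝ)
    (b1 b2 : Fin k → ℝ) (η1 η2 : ℝ) (hη1 : 0 < η1) (hη2 : 0 < η2)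
    (x y : ℕ → Fin k → ℝ) (xs ys : Fin k → ℝ)
    (hx : ∀ t, x (t + 1) = x t + η1 • (A.mulVec (y t) - b1))
    (hy : ∀ t, y (t + 1) = y t + η2 • (-(Aᵀ.mulVec (x (t + 1))) - b2))
    (hxs : -(Aᵀ.mulVec xs) = b2) (hys : A.mulVec ys = b1) :
    (∀ t, hminus A b1 b2 xs ys η1 η2 (x (t + 1)) (y (t + 1)) =
        hminus A b1 b2 xs ys η1 η2 (x t) (y t)) ∧
    (∀ t, hminus A b1 b2 xs ys η1 η2 (x t) (y t) =
        hminus A b1 b2 xs ys η1 η2 (x 0) (y 0)) := by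
  have h1 : ∀ t, hminus A b1 b2 xs ys η1 η2 (x (t + 1)) (y (t + 1)) =
      hminus A b1 b2 xs ys η1 η2 (x t) (y t) := by
    intro t
    rw [hy t, hx t]
    exact hminus_step A b1 b2 η1 η2 hη1.ne' hη2.ne' xs ys hxs hys (x t) (y t)
  refine ⟨h1, ?_⟩
  intro t
  induction t with
  | zero => rfl
  | succ n ih => rw [h1 n, ih]
end

section
/- For alternating gradient descent in a coordination game, the perturbed energy h₊^t = ‖x^t - x*‖²/η₁ - ‖y^t - y*‖²/η₂ + ⟨x^t, A y^t - b1⟩ - ⟨y^t, b2⟩ is time-invariant: h₊^{t+1} = h₊^t for all t ≥ 0. -/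
open Matrix

/-- The perturbed energy for coordination games. -/
noncomputable def hplus {k : ℕ} (A : Matrix (Fin k) (Fin k) ℝ)
    (b1 b2 xs ys : Fin k → ℝ) (η1 η2 : ℝ) (x y : Fin k → ℝ) : ℝ :=
  (x - xs) ⬝ᵥ (x - xs) / η1 - (y - ys) ⬝ᵥ (y - ys) / η2 +
    x ⬝ᵥ (A.mulVec y - b1) - y ⬝ᵥ b2

/-- Coordination alternating GD: the perturbed energy h₊ is time-invariant. -/
theorem coord_energy_invariant {k : ℕ} (A : Matrix (Fin k) (Fin k) ℝ)
    (b1 b2 : Fin k → ℝ) (η1 η2 : ℝ) (hη1 : 0 < η1) (hη2 : 0 < η2)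
    (x y : ℕ → Fin k → ℝ) (xs ys : Fin k → ℝ)
    (hx : ∀ t, x (t + 1) = x t + η1 • (A.mulVec (y t) - b1))
    (hy : ∀ t, y (t + 1) = y t + η2 • (Aᵀ.mulVec (x (t + 1)) - b2))
    (hxs : Aᵀ.mulVec xs = b2) (hys : A.mulVec ys = b1) :
    ∀ t, hplus A b1 b2 xs ys η1 η2 (x (t + 1)) (y (t + 1)) =
        hplus A b1 b2 xs ys η1 η2 (x t) (y t) := by
  intro t
  have hxt := hx t
  have hyt := hy t
  rw [hxt] at hyt
  subst hxs hys
  rw [hxt, hyt]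
  unfold hplus
  simp only [Matrix.mulVec_transpose, Matrix.mulVec_add, Matrix.mulVec_sub, Matrix.mulVec_smul,
    Matrix.vecMul_add, Matrix.vecMul_sub, Matrix.vecMul_smul,
    dotProduct_add, add_dotProduct, dotProduct_sub, sub_dotProduct,
    smul_dotProduct, dotProduct_smul, Matrix.dotProduct_mulVec,
    Matrix.add_vecMul, Matrix.sub_vecMul, smul_eq_mul, dotProduct_comm]
  have hsym : ∀ a b : Fin k → ℝ, a ⬝ᵥ (A *ᵥ b) ᵥ* A = b ⬝ᵥ (A *ᵥ a) ᵥ* A := by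
    intro a b
    rw [dotProduct_comm, ← Matrix.dotProduct_mulVec, dotProduct_comm,
      Matrix.dotProduct_mulVec, dotProduct_comm]
  simp only [hsym]
  field_simp
  ring
end

section
/- For two consecutive iterations of alternating gradient descent in a zero-sum game, the Nash equilibrium (x*, y*) and cost vector b2 satisfy the linear equation 0 = (‖x^t‖² - ‖x^{t+1}‖² - 2⟨x^t - x^{t+1}, x*⟩)/η₁ + (‖y^t‖² - ‖y^{t+1}‖² - 2⟨y^t - y^{t+1}, y*⟩)/η₂ + ⟨x^t, Ay^t - b1⟩ + ⟨y^t, b2⟩ - ⟨x^{t+1}, Ay^{t+1} - b1⟩ - ⟨y^{t+1}, b2⟩. -/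
open Matrix

/-- Zero-sum: linear equation in (x*, y*, b2) from two consecutive AltGD iterates. -/
theorem zero_sum_linear_equation {k : ℕ} (A : Matrix (Fin k) (Fin k) ℝ)
    (b1 b2 : Fin k → ℝ) (η1 η2 : ℝ) (hη1 : 0 < η1) (hη2 : 0 < η2)
    (xt yt xt1 yt1 xs ys : Fin k → ℝ)
    (hx : xt1 = xt + η1 • (A.mulVec yt - b1))
    (hy : yt1 = yt + η2 • (-(Aᵀ.mulVec xt1) - b2))
    (hxs : -(Aᵀ.mulVec xs) = b2) (hys : A.mulVec ys = b1) :
    0 = (xt ⬝ᵥ xt - xt1 ⬝ᵥ xt1 - 2 * ((xt - xt1) ⬝ᵥ xs)) / η1 +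
        (yt ⬝ᵥ yt - yt1 ⬝ᵥ yt1 - 2 * ((yt - yt1) ⬝ᵥ ys)) / η2 +
        xt ⬝ᵥ (A.mulVec yt - b1) + yt ⬝ᵥ b2 -
        xt1 ⬝ᵥ (A.mulVec yt1 - b1) - yt1 ⬝ᵥ b2 := by
  set u := A.mulVec yt - b1 with hu
  set v := -(Aᵀ.mulVec xt1) - b2 with hv
  -- transpose swap
  have hW : ∀ p q : Fin k → ℝ, (Aᵀ.mulVec p) ⬝ᵥ q = p ⬝ᵥ A.mulVec q := by
    intro p q; rw [mulVec_transpose, ← dotProduct_mulVec]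
  have hxs' : Aᵀ.mulVec xs = -b2 := neg_eq_iff_eq_neg.1 hxs
  have hAyt : A.mulVec yt = u + b1 := by rw [hu]; abel
  have hAxt1 : Aᵀ.mulVec xt1 = -v - b2 := by rw [hv]; abel
  have hS1 : xt1 ⬝ᵥ xt1 = xt ⬝ᵥ xt + 2*η1*(xt ⬝ᵥ u) + η1^2*(u ⬝ᵥ u) := by
    rw [hx]
    simp only [add_dotProduct, dotProduct_add, smul_dotProduct, dotProduct_smul, smul_eq_mul]
    rw [dotProduct_comm u xt]; ring
  have hS2 : (xt - xt1) ⬝ᵥ xs = -(η1 * (u ⬝ᵥ xs)) := by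
    rw [hx]
    simp only [sub_dotProduct, add_dotProduct, smul_dotProduct, smul_eq_mul]
    ring
  have hS3 : yt1 ⬝ᵥ yt1 = yt ⬝ᵥ yt + 2*η2*(yt ⬝ᵥ v) + η2^2*(v ⬝ᵥ v) := by
    rw [hy]
    simp only [add_dotProduct, dotProduct_add, smul_dotProduct, dotProduct_smul, smul_eq_mul]
    rw [dotProduct_comm v yt]; ring
  have hS4 : (yt - yt1) ⬝ᵥ ys = -(η2 * (v ⬝ᵥ ys)) := by
    rw [hy]
    simp only [sub_dotProduct, add_dotProduct, smul_dotProduct, smul_eq_mul]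
    ring
  have hS5 : xt1 ⬝ᵥ (A.mulVec yt1 - b1) = xt1 ⬝ᵥ u + η2 * (xt1 ⬝ᵥ A.mulVec v) := by
    rw [hy]
    simp only [mulVec_add, mulVec_smul, hu, dotProduct_sub, dotProduct_add, dotProduct_smul,
      smul_eq_mul]
    ring
  have hS6 : yt1 ⬝ᵥ b2 = yt ⬝ᵥ b2 + η2 * (v ⬝ᵥ b2) := by
    rw [hy]
    simp only [add_dotProduct, smul_dotProduct, smul_eq_mul]
  have hS7 : xt1 ⬝ᵥ A.mulVec v = -(v ⬝ᵥ v) - v ⬝ᵥ b2 := by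
    rw [← hW, hAxt1]
    simp only [sub_dotProduct, neg_dotProduct]
    rw [dotProduct_comm b2 v]
  have hS8 : u ⬝ᵥ xs = ys ⬝ᵥ b2 - yt ⬝ᵥ b2 := by
    rw [hu, ← hys, sub_dotProduct, dotProduct_comm (A.mulVec yt) xs,
      dotProduct_comm (A.mulVec ys) xs, ← hW, ← hW, hxs']
    simp only [neg_dotProduct, dotProduct_comm b2]
    ring
  have hS9 : v ⬝ᵥ ys = xs ⬝ᵥ b1 - xt1 ⬝ᵥ b1 := by
    rw [hv]
    simp only [sub_dotProduct, neg_dotProduct]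
    rw [hW, hys, ← hxs]
    simp only [neg_dotProduct, hW, hys]
    ring
  have hS10 : yt ⬝ᵥ v = -(xt1 ⬝ᵥ u) - xt1 ⬝ᵥ b1 - yt ⬝ᵥ b2 := by
    rw [hv]
    simp only [dotProduct_sub, dotProduct_neg]
    rw [dotProduct_comm yt (Aᵀ.mulVec xt1), hW, hAyt, dotProduct_add]
    ring
  have hS11 : xt ⬝ᵥ u = xt1 ⬝ᵥ u - η1*(u ⬝ᵥ u) := by
    rw [hx]
    simp only [add_dotProduct, smul_dotProduct, smul_eq_mul]
    ring
  have hS14 : ys ⬝ᵥ b2 = -(xs ⬝ᵥ b1) := by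
    rw [← hxs, dotProduct_neg, dotProduct_comm ys, hW, hys]
  rw [hS1, hS2, hS3, hS4, hS5, hS6, hS7, hS10, hS8, hS9, hS11, hS14]
  field_simp
  ring
end

section
/- For two consecutive iterations of alternating gradient descent in a coordination game, the Nash equilibrium (x*, y*) and cost vector b2 satisfy the linear equation 0 = (‖x^t‖² - ‖x^{t+1}‖² - 2⟨x^t - x^{t+1}, x*⟩)/η₁ - (‖y^t‖² - ‖y^{t+1}‖² - 2⟨y^t - y^{t+1}, y*⟩)/η₂ + ⟨x^t, Ay^t - b1⟩ - ⟨y^t, b2⟩ - ⟨x^{t+1}, Ay^{t+1} - b1⟩ + ⟨y^{t+1}, b2⟩. -/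
open Matrix

/-- Coordination: linear equation in (x*, y*, b2) from two consecutive AltGD iterates. -/
theorem coord_linear_equation {k : ℕ} (A : Matrix (Fin k) (Fin k) ℝ)
    (b1 b2 : Fin k → ℝ) (η1 η2 : ℝ) (hη1 : 0 < η1) (hη2 : 0 < η2)
    (xt yt xt1 yt1 xs ys : Fin k → ℝ)
    (hx : xt1 = xt + η1 • (A.mulVec yt - b1))
    (hy : yt1 = yt + η2 • (Aᵀ.mulVec xt1 - b2))
    (hxs : Aᵀ.mulVec xs = b2) (hys : A.mulVec ys = b1) :
    0 = (xt ⬝ᵥ xt - xt1 ⬝ᵥ xt1 - 2 * ((xt - xt1) ⬝ᵥ xs)) / η1 -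
        (yt ⬝ᵥ yt - yt1 ⬝ᵥ yt1 - 2 * ((yt - yt1) ⬝ᵥ ys)) / η2 +
        xt ⬝ᵥ (A.mulVec yt - b1) - yt ⬝ᵥ b2 -
        xt1 ⬝ᵥ (A.mulVec yt1 - b1) + yt1 ⬝ᵥ b2 := by
  have h1 : η1 ≠ 0 := hη1.ne'
  have h2 : η2 ≠ 0 := hη2.ne'
  have key1 : ∀ a b : Fin k → ℝ, a ⬝ᵥ (A *ᵥ b) = (Aᵀ *ᵥ a) ⬝ᵥ b := fun a b => by
    rw [Matrix.dotProduct_mulVec, ← Matrix.mulVec_transpose]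
  have key2 : ∀ a b : Fin k → ℝ, a ⬝ᵥ (Aᵀ *ᵥ b) = (A *ᵥ a) ⬝ᵥ b := fun a b => by
    rw [Matrix.dotProduct_mulVec, Matrix.vecMul_transpose]
  set u : Fin k → ℝ := A *ᵥ yt - b1 with hu
  set v : Fin k → ℝ := Aᵀ *ᵥ xt1 - b2 with hv
  have hAyt : A *ᵥ yt = u + b1 := by rw [hu]; abel
  have hAxt1 : Aᵀ *ᵥ xt1 = v + b2 := by rw [hv]; abel
  have F1 : u ⬝ᵥ xs = yt ⬝ᵥ b2 - ys ⬝ᵥ b2 := by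
    have e1 : (A *ᵥ yt) ⬝ᵥ xs = yt ⬝ᵥ b2 := by
      rw [dotProduct_comm, key1, hxs, dotProduct_comm]
    have e2 : b1 ⬝ᵥ xs = ys ⬝ᵥ b2 := by
      rw [← hys, dotProduct_comm, key1, hxs, dotProduct_comm]
    rw [hu, sub_dotProduct, e1, e2]
  have F2 : v ⬝ᵥ ys = b1 ⬝ᵥ xt + η1 * (b1 ⬝ᵥ u) - b2 ⬝ᵥ ys := by
    have e1 : (Aᵀ *ᵥ xt1) ⬝ᵥ ys = b1 ⬝ᵥ xt + η1 * (b1 ⬝ᵥ u) := by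
      rw [dotProduct_comm, key2, hys, hx, dotProduct_add, dotProduct_smul, smul_eq_mul]
    rw [hv, sub_dotProduct, e1]
  have e4 : yt ⬝ᵥ v = xt ⬝ᵥ u + η1 * (u ⬝ᵥ u) + b1 ⬝ᵥ xt + η1 * (b1 ⬝ᵥ u) - yt ⬝ᵥ b2 := by
    have e1 : yt ⬝ᵥ (Aᵀ *ᵥ xt1) = (u + b1) ⬝ᵥ (xt + η1 • u) := by
      rw [key2, hAyt, hx]
    rw [hv, dotProduct_sub, e1]
    simp only [add_dotProduct, dotProduct_add, dotProduct_smul, smul_eq_mul]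
    rw [dotProduct_comm u xt]
    ring
  have e3 : xt ⬝ᵥ (A *ᵥ v) + η1 * (u ⬝ᵥ (A *ᵥ v)) = v ⬝ᵥ v + b2 ⬝ᵥ v := by
    have e1 : xt1 ⬝ᵥ (A *ᵥ v) = v ⬝ᵥ v + b2 ⬝ᵥ v := by
      rw [key1, hAxt1, add_dotProduct]
    rw [← e1, hx]
    simp only [add_dotProduct, smul_dotProduct, smul_eq_mul]
  have cu : u ⬝ᵥ xt = xt ⬝ᵥ u := dotProduct_comm u xt
  have cv : v ⬝ᵥ yt = yt ⬝ᵥ v := dotProduct_comm v yt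
  have cb : v ⬝ᵥ b2 = b2 ⬝ᵥ v := dotProduct_comm v b2
  have cy : b2 ⬝ᵥ ys = ys ⬝ᵥ b2 := dotProduct_comm b2 ys
  rw [hx, hy]
  simp only [Matrix.mulVec_add, Matrix.mulVec_smul, hAyt, add_dotProduct, dotProduct_add,
    sub_dotProduct, dotProduct_sub, smul_dotProduct, dotProduct_smul, smul_eq_mul]
  field_simp
  linear_combination (η1 * η2) * (-2 * F1 + 2 * F2 - 2 * e4 + cu - cv - η2 * cb - 2 * cy)
    + η1 * η2 * η2 * e3
end

section
/- For two consecutive iterations of alternating gradient descent in a zero-sum game, the Nash equilibrium (x*, y*) satisfies a linear equation not involving b2: 0 = (‖x^t‖² - ‖x^{t+1}‖² - 2⟨x^t - x^{t+1}, x*⟩)/η₁ + (‖y^t‖² - ‖y^{t+1}‖² - 2⟨y^t - y^{t+1}, y*⟩)/η₂ + ⟨x^t - x*, Ay^t - b1⟩ - ⟨x^{t+1} - x*, Ay^{t+1} - b1⟩. -/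
open Matrix

/-- Zero-sum: b2-free linear equation in (x*, y*) from two consecutive AltGD iterates. -/
theorem zero_sum_linear_equation_no_b2 {k : ℕ} (A : Matrix (Fin k) (Fin k) ℝ)
    (b1 b2 : Fin k → ℝ) (η1 η2 : ℝ) (hη1 : 0 < η1) (hη2 : 0 < η2)
    (xt yt xt1 yt1 xs ys : Fin k → ℝ)
    (hx : xt1 = xt + η1 • (A.mulVec yt - b1))
    (hy : yt1 = yt + η2 • (-(Aᵀ.mulVec xt1) - b2))
    (hxs : -(Aᵀ.mulVec xs) = b2) (hys : A.mulVec ys = b1) :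
    0 = (xt ⬝ᵥ xt - xt1 ⬝ᵥ xt1 - 2 * ((xt - xt1) ⬝ᵥ xs)) / η1 +
        (yt ⬝ᵥ yt - yt1 ⬝ᵥ yt1 - 2 * ((yt - yt1) ⬝ᵥ ys)) / η2 +
        (xt - xs) ⬝ᵥ (A.mulVec yt - b1) -
        (xt1 - xs) ⬝ᵥ (A.mulVec yt1 - b1) := by
  set g : Fin k → ℝ := A.mulVec yt - b1 with hg
  set h : Fin k → ℝ := -(Aᵀ.mulVec xt1) - b2 with hh
  -- A yt1 - b1 = g + η2 • A h
  have hAyt1 : A.mulVec yt1 - b1 = g + η2 • A.mulVec h := by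
    rw [hy]
    simp [mulVec_add, mulVec_smul, hg]
    abel
  -- key inner product identities
  have key1 : (xt1 - xs) ⬝ᵥ A.mulVec h = -(h ⬝ᵥ h) := by
    rw [dotProduct_mulVec, ← mulVec_transpose,
      mulVec_sub]
    have h1 : Aᵀ.mulVec xt1 = -h - b2 := by rw [hh]; abel
    have h2 : Aᵀ.mulVec xs = -b2 := by rw [← hxs]; abel
    rw [h1, h2]
    have : (-h - b2 - -b2) = -h := by abel
    rw [this, neg_dotProduct]
  have key2 : (xt1 - xs) ⬝ᵥ g = -((yt - ys) ⬝ᵥ h) := by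
    have hgA : g = A.mulVec (yt - ys) := by rw [mulVec_sub, hys, hg]
    rw [hgA, dotProduct_mulVec, ← mulVec_transpose,
      mulVec_sub]
    have h1 : Aᵀ.mulVec xt1 = -h - b2 := by rw [hh]; abel
    have h2 : Aᵀ.mulVec xs = -b2 := by rw [← hxs]; abel
    rw [h1, h2]
    have : (-h - b2 - -b2) = -h := by abel
    rw [this, neg_dotProduct, dotProduct_comm]
  rw [hAyt1, hx, hy]
  simp only [dotProduct_add, add_dotProduct, dotProduct_sub, sub_dotProduct,
    smul_dotProduct, dotProduct_smul, smul_eq_mul]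
  have c1 : g ⬝ᵥ xt = xt ⬝ᵥ g := dotProduct_comm _ _
  have c2 : h ⬝ᵥ yt = yt ⬝ᵥ h := dotProduct_comm _ _
  have c3 : g ⬝ᵥ xs = xs ⬝ᵥ g := dotProduct_comm _ _
  have c4 : h ⬝ᵥ ys = ys ⬝ᵥ h := dotProduct_comm _ _
  -- expand key identities in terms of base dot products
  have k1 : xt ⬝ᵥ A.mulVec h + η1 * (g ⬝ᵥ A.mulVec h) - xs ⬝ᵥ A.mulVec h = -(h ⬝ᵥ h) := by
    have := key1
    rw [hx] at this
    simpa [sub_dotProduct, add_dotProduct, smul_dotProduct, smul_eq_mul] using this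
  have k2 : xt ⬝ᵥ g + η1 * (g ⬝ᵥ g) - xs ⬝ᵥ g = -(yt ⬝ᵥ h - ys ⬝ᵥ h) := by
    have := key2
    rw [hx] at this
    simpa [sub_dotProduct, add_dotProduct, smul_dotProduct, smul_eq_mul] using this
  field_simp
  linear_combination (η1 * η2 * η2) * k1 + (2 * η1 * η2) * k2 + (η1 * η2) * c1 -
    (2 * η1 * η2) * c3 + (η1 * η2) * c2 - (2 * η1 * η2) * c4
end

section
/- For two consecutive iterations of alternating gradient descent in a coordination game, the Nash equilibrium (x*, y*) satisfies the b2-free linear equation 0 = (‖x^t‖² - ‖x^{t+1}‖² - 2⟨x^t - x^{t+1}, x*⟩)/η₁ - (‖y^t‖² - ‖y^{t+1}‖² - 2⟨y^t - y^{t+1}, y*⟩)/η₂ + ⟨x^t - x*, Ay^t - b1⟩ - ⟨x^{t+1} - x*, Ay^{t+1} - b1⟩. -/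
open Matrix

/-- Coordination: b2-free linear equation in (x*, y*) from two consecutive AltGD iterates. -/
theorem coord_linear_equation_no_b2 {k : ℕ} (A : Matrix (Fin k) (Fin k) ℝ)
    (b1 b2 : Fin k → ℝ) (η1 η2 : ℝ) (hη1 : 0 < η1) (hη2 : 0 < η2)
    (xt yt xt1 yt1 xs ys : Fin k → ℝ)
    (hx : xt1 = xt + η1 • (A.mulVec yt - b1))
    (hy : yt1 = yt + η2 • (Aᵀ.mulVec xt1 - b2))
    (hxs : Aᵀ.mulVec xs = b2) (hys : A.mulVec ys = b1) :
    0 = (xt ⬝ᵥ xt - xt1 ⬝ᵥ xt1 - 2 * ((xt - xt1) ⬝ᵥ xs)) / η1 -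
        (yt ⬝ᵥ yt - yt1 ⬝ᵥ yt1 - 2 * ((yt - yt1) ⬝ᵥ ys)) / η2 +
        (xt - xs) ⬝ᵥ (A.mulVec yt - b1) -
        (xt1 - xs) ⬝ᵥ (A.mulVec yt1 - b1) := by
  have key : ∀ u v : Fin k → ℝ, u ⬝ᵥ A.mulVec v = Aᵀ.mulVec u ⬝ᵥ v := by
    intro u v
    rw [Matrix.mulVec_transpose, ← Matrix.dotProduct_mulVec]
  set g : Fin k → ℝ := A.mulVec yt - b1 with hg
  set h : Fin k → ℝ := Aᵀ.mulVec xt1 - b2 with hh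
  have e1 : A.mulVec (yt + η2 • h) - b1 = g + η2 • A.mulVec h := by
    rw [Matrix.mulVec_add, Matrix.mulVec_smul, hg]; abel
  have f1 : (xt1 - xs) ⬝ᵥ A.mulVec h = h ⬝ᵥ h := by
    rw [key, Matrix.mulVec_sub, hxs, ← hh]
  have f2 : xt1 ⬝ᵥ g - xs ⬝ᵥ g = h ⬝ᵥ yt - h ⬝ᵥ ys := by
    have := key (xt1 - xs) (yt - ys)
    rw [Matrix.mulVec_sub, hys, ← hg, Matrix.mulVec_sub, hxs, ← hh] at this
    simpa [sub_dotProduct, dotProduct_sub] using this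
  rw [hy, hx, e1]
  have hxg : xt1 ⬝ᵥ g = xt ⬝ᵥ g + η1 * (g ⬝ᵥ g) := by
    rw [hx]; simp [add_dotProduct, smul_dotProduct]
  rw [hx] at f1
  simp only [dotProduct_add, add_dotProduct, dotProduct_sub, sub_dotProduct,
    dotProduct_smul, smul_dotProduct, smul_eq_mul] at f1 hxg ⊢
  have c1 : g ⬝ᵥ xt = xt ⬝ᵥ g := dotProduct_comm _ _
  have c2 : g ⬝ᵥ xs = xs ⬝ᵥ g := dotProduct_comm _ _
  have c3 : h ⬝ᵥ yt = yt ⬝ᵥ h := dotProduct_comm _ _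
  have c4 : h ⬝ᵥ ys = ys ⬝ᵥ h := dotProduct_comm _ _
  have c5 : g ⬝ᵥ h = h ⬝ᵥ g := dotProduct_comm _ _
  have hxg' : xt1 ⬝ᵥ g - xs ⬝ᵥ g = xt ⬝ᵥ g + η1 * (g ⬝ᵥ g) - xs ⬝ᵥ g := by
    rw [← hxg]
  have f2' : xt ⬝ᵥ g + η1 * (g ⬝ᵥ g) - xs ⬝ᵥ g = h ⬝ᵥ yt - h ⬝ᵥ ys := by
    rw [← hxg']; exact f2
  field_simp
  linear_combination (2 * η1 * η2) * f2' + (η1 * η2) * c1 - (2 * η1 * η2) * c2 +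
    (η1 * η2) * c3 + (η1 * η2^2) * f1
end

section
/- For two consecutive iterations of alternating gradient descent in a zero-sum game, the unknowns x* and b1 satisfy the (quadratic in the pair) equation 0 = (‖x^t‖² - ‖x^{t+1}‖² - 2⟨x^t - x^{t+1}, x*⟩)/η₁ + (‖y^t‖² - ‖y^{t+1}‖²)/η₂ - 2⟨x^{t+1}, b1⟩ + 2⟨x*, b1⟩ + ⟨x^t - x*, Ay^t - b1⟩ - ⟨x^{t+1} - x*, Ay^{t+1} - b1⟩, which involves agent 2's strategies only through the norms ‖y^t‖, ‖y^{t+1}‖. -/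
open Matrix

/-- Zero-sum: nonlinear equation in (x*, b1) using only norms of agent 2's strategies. -/
theorem zero_sum_nonlinear_equation_norm_y {k : ℕ} (A : Matrix (Fin k) (Fin k) ℝ)
    (b1 b2 : Fin k → ℝ) (η1 η2 : ℝ) (hη1 : 0 < η1) (hη2 : 0 < η2)
    (xt yt xt1 yt1 xs ys : Fin k → ℝ)
    (hx : xt1 = xt + η1 • (A.mulVec yt - b1))
    (hy : yt1 = yt + η2 • (-(Aᵀ.mulVec xt1) - b2))
    (hxs : -(Aᵀ.mulVec xs) = b2) (hys : A.mulVec ys = b1) :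
    0 = (xt ⬝ᵥ xt - xt1 ⬝ᵥ xt1 - 2 * ((xt - xt1) ⬝ᵥ xs)) / η1 +
        (yt ⬝ᵥ yt - yt1 ⬝ᵥ yt1) / η2 -
        2 * (xt1 ⬝ᵥ b1) + 2 * (xs ⬝ᵥ b1) +
        (xt - xs) ⬝ᵥ (A.mulVec yt - b1) -
        (xt1 - xs) ⬝ᵥ (A.mulVec yt1 - b1) := by
  have hA : ∀ a b : Fin k → ℝ, a ⬝ᵥ A.mulVec b = Aᵀ.mulVec a ⬝ᵥ b := by
    intro a b
    rw [Matrix.dotProduct_mulVec, Matrix.mulVec_transpose]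
  have hAT : ∀ a b : Fin k → ℝ, a ⬝ᵥ Aᵀ.mulVec b = A.mulVec a ⬝ᵥ b := by
    intro a b
    rw [Matrix.dotProduct_mulVec, Matrix.vecMul_transpose]
  set u := A.mulVec yt - b1 with hu
  set v := -(Aᵀ.mulVec xt1) - b2 with hv
  have E1 : xt1 ⬝ᵥ xt1 = xt ⬝ᵥ xt + 2*η1*(xt ⬝ᵥ u) + η1^2*(u ⬝ᵥ u) := by
    rw [hx]
    simp only [dotProduct_add, add_dotProduct, dotProduct_smul, smul_dotProduct, smul_eq_mul]
    rw [dotProduct_comm u xt]; ring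
  have E2 : (xt - xt1) ⬝ᵥ xs = -(η1 * (xs ⬝ᵥ u)) := by
    rw [hx]
    simp only [sub_dotProduct, add_dotProduct, smul_dotProduct, smul_eq_mul]
    rw [dotProduct_comm u xs]; ring
  have E3 : yt1 ⬝ᵥ yt1 = yt ⬝ᵥ yt + 2*η2*(yt ⬝ᵥ v) + η2^2*(v ⬝ᵥ v) := by
    rw [hy]
    simp only [dotProduct_add, add_dotProduct, dotProduct_smul, smul_dotProduct, smul_eq_mul]
    rw [dotProduct_comm v yt]; ring
  have E4 : xt1 ⬝ᵥ b1 = xt ⬝ᵥ b1 + η1 * (u ⬝ᵥ b1) := by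
    rw [hx]
    simp only [add_dotProduct, smul_dotProduct, smul_eq_mul]
  have E5 : (xt - xs) ⬝ᵥ u = xt ⬝ᵥ u - xs ⬝ᵥ u := sub_dotProduct xt xs u
  have hAxs : Aᵀ.mulVec xs = -b2 := by rw [← hxs, neg_neg]
  have hAxt1 : Aᵀ.mulVec xt1 = -v - b2 := by rw [hv]; ring_nf
  have E6 : (xt1 - xs) ⬝ᵥ (A.mulVec yt1 - b1)
      = (xt ⬝ᵥ u + η1*(u ⬝ᵥ u) - xs ⬝ᵥ u) - η2*(v ⬝ᵥ v) := by
    have h1 : A.mulVec yt1 - b1 = u + η2 • A.mulVec v := by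
      rw [hy, Matrix.mulVec_add, Matrix.mulVec_smul, hu]; ring_nf
    rw [h1]
    simp only [dotProduct_add, dotProduct_smul, smul_eq_mul]
    rw [hA (xt1 - xs) v, Matrix.mulVec_sub, hAxt1, hAxs]
    have h2 : (-v - b2 - -b2) ⬝ᵥ v = -(v ⬝ᵥ v) := by
      simp only [sub_dotProduct, neg_dotProduct]; ring
    rw [h2, hx]
    simp only [add_dotProduct, sub_dotProduct, smul_dotProduct, smul_eq_mul]
    ring
  have E7 : yt ⬝ᵥ v = -(xt ⬝ᵥ u + xt ⬝ᵥ b1 + η1*(u ⬝ᵥ u) + η1*(u ⬝ᵥ b1))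
      + (xs ⬝ᵥ u + xs ⬝ᵥ b1) := by
    rw [hv]
    simp only [dotProduct_sub, dotProduct_neg]
    rw [hAT yt xt1, ← hxs, dotProduct_neg, hAT yt xs]
    have hAyt : A.mulVec yt = u + b1 := by rw [hu]; ring_nf
    rw [hAyt, hx]
    simp only [add_dotProduct, dotProduct_add, smul_eq_mul, dotProduct_smul]
    rw [dotProduct_comm u xt, dotProduct_comm b1 xt, dotProduct_comm u xs,
      dotProduct_comm b1 xs, dotProduct_comm b1 u]
    ring
  rw [E1, E2, E3, E4, E6, E7, E5]
  field_simp
  ring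
end

section
/- For three consecutive iterations of alternating gradient descent in a zero-sum game, x* and b1 satisfy the linear equation 0 = (‖x^t‖² - 2‖x^{t+1}‖² + ‖x^{t+2}‖²)/η₁ + (‖y^t‖² - 2‖y^{t+1}‖² + ‖y^{t+2}‖²)/η₂ + ⟨x^t - x*, Ay^t - b1⟩ - 2⟨x^{t+1} - x*, Ay^{t+1} - b1⟩ + ⟨x^{t+2} - x*, Ay^{t+2} - b1⟩ - 2⟨x^t - 2x^{t+1} + x^{t+2}, x*⟩/η₁ - 2⟨x^{t+1} - x^{t+2}, b1⟩, where the nonlinear terms ⟨x*, b1⟩ from consecutive differences cancel. -/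
open Matrix

lemma adj_dot {k : ℕ} (A : Matrix (Fin k) (Fin k) ℝ) (v w : Fin k → ℝ) :
    v ⬝ᵥ (Aᵀ.mulVec w) = w ⬝ᵥ (A.mulVec v) := by
  rw [Matrix.mulVec_transpose, Matrix.dotProduct_mulVec, dotProduct_comm]

lemma step_S {k : ℕ} (A : Matrix (Fin k) (Fin k) ℝ) (b1 b2 xs : Fin k → ℝ)
    (η1 η2 : ℝ) (hη1 : η1 ≠ 0) (hη2 : η2 ≠ 0) (x y x' y' : Fin k → ℝ)
    (hx' : x' = x + η1 • (A.mulVec y - b1))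
    (hy' : y' = y + η2 • (-(Aᵀ.mulVec x') - b2))
    (hxs : -(Aᵀ.mulVec xs) = b2) :
    (x ⬝ᵥ x - x' ⬝ᵥ x') / η1 + (y ⬝ᵥ y - y' ⬝ᵥ y') / η2
      + (x - xs) ⬝ᵥ (A.mulVec y - b1) - (x' - xs) ⬝ᵥ (A.mulVec y' - b1)
      - 2 * ((x - x') ⬝ᵥ xs) / η1 - 2 * (x' ⬝ᵥ b1) = -2 * (xs ⬝ᵥ b1) := by
  set g : Fin k → ℝ := A.mulVec y - b1 with hg
  set g' : Fin k → ℝ := A.mulVec y' - b1 with hg'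
  set h : Fin k → ℝ := -(Aᵀ.mulVec x') - b2 with hh
  have F1 : (x ⬝ᵥ x - x' ⬝ᵥ x') / η1 = -2 * (x ⬝ᵥ g) - η1 * (g ⬝ᵥ g) := by
    rw [hx']
    field_simp
    simp [add_dotProduct, dotProduct_add, smul_dotProduct, dotProduct_smul,
      dotProduct_comm g x]
    ring
  have F2 : (y ⬝ᵥ y - y' ⬝ᵥ y') / η2 = -2 * (y ⬝ᵥ h) - η2 * (h ⬝ᵥ h) := by
    rw [hy']
    field_simp
    simp [add_dotProduct, dotProduct_add, smul_dotProduct, dotProduct_smul,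
      dotProduct_comm h y]
    ring
  have F3 : ((x - x') ⬝ᵥ xs) / η1 = -(xs ⬝ᵥ g) := by
    rw [hx']
    field_simp
    simp [sub_dotProduct, add_dotProduct, smul_dotProduct, dotProduct_comm g xs]
  have F4 : x' ⬝ᵥ g = x ⬝ᵥ g + η1 * (g ⬝ᵥ g) := by
    rw [hx']; simp [add_dotProduct, smul_dotProduct]
  have F5 : y' ⬝ᵥ h = y ⬝ᵥ h + η2 * (h ⬝ᵥ h) := by
    rw [hy']; simp [add_dotProduct, smul_dotProduct]
  have F6 : x' ⬝ᵥ g + x' ⬝ᵥ g' = x' ⬝ᵥ (A.mulVec (y + y')) - 2 * (x' ⬝ᵥ b1) := by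
    rw [hg, hg']
    simp [Matrix.mulVec_add, dotProduct_add, dotProduct_sub]
    ring
  have F7 : y ⬝ᵥ h + y' ⬝ᵥ h
      = -(x' ⬝ᵥ (A.mulVec (y + y'))) - (y ⬝ᵥ b2 + y' ⬝ᵥ b2) := by
    rw [hh]
    simp [dotProduct_sub, dotProduct_neg, dotProduct_add, Matrix.mulVec_add,
      adj_dot A]
    ring
  have F8 : xs ⬝ᵥ g + xs ⬝ᵥ g' = xs ⬝ᵥ (A.mulVec (y + y')) - 2 * (xs ⬝ᵥ b1) := by
    rw [hg, hg']
    simp [Matrix.mulVec_add, dotProduct_add, dotProduct_sub]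
    ring
  have F9 : xs ⬝ᵥ (A.mulVec (y + y')) = -(y ⬝ᵥ b2 + y' ⬝ᵥ b2) := by
    have : (y + y') ⬝ᵥ (Aᵀ.mulVec xs) = xs ⬝ᵥ (A.mulVec (y + y')) := adj_dot A (y + y') xs
    have h2 : (y + y') ⬝ᵥ (Aᵀ.mulVec xs) = -((y + y') ⬝ᵥ b2) := by
      rw [← hxs]; simp
    rw [← this, h2]
    simp [add_dotProduct, dotProduct_comm b2]
  have E1 : (x - xs) ⬝ᵥ g = x ⬝ᵥ g - xs ⬝ᵥ g := by simp [sub_dotProduct]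
  have E2 : (x' - xs) ⬝ᵥ g' = x' ⬝ᵥ g' - xs ⬝ᵥ g' := by simp [sub_dotProduct]
  rw [F1, F2, mul_div_assoc 2 ((x - x') ⬝ᵥ xs) η1, F3, E1, E2]
  linear_combination F4 + F5 - F6 - F7 + F8 + F9

/-- Zero-sum: linear equation in (x*, b1) from three consecutive AltGD iterates. -/
theorem zero_sum_linear_equation_three_iterates {k : ℕ} (A : Matrix (Fin k) (Fin k) ℝ)
    (b1 b2 : Fin k → ℝ) (η1 η2 : ℝ) (hη1 : 0 < η1) (hη2 : 0 < η2)
    (xt yt xt1 yt1 xt2 yt2 xs ys : Fin k → ℝ)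
    (hx1 : xt1 = xt + η1 • (A.mulVec yt - b1))
    (hy1 : yt1 = yt + η2 • (-(Aᵀ.mulVec xt1) - b2))
    (hx2 : xt2 = xt1 + η1 • (A.mulVec yt1 - b1))
    (hy2 : yt2 = yt1 + η2 • (-(Aᵀ.mulVec xt2) - b2))
    (hxs : -(Aᵀ.mulVec xs) = b2) (hys : A.mulVec ys = b1) :
    0 = (xt ⬝ᵥ xt - 2 * (xt1 ⬝ᵥ xt1) + xt2 ⬝ᵥ xt2) / η1 +
        (yt ⬝ᵥ yt - 2 * (yt1 ⬝ᵥ yt1) + yt2 ⬝ᵥ yt2) / η2 +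
        (xt - xs) ⬝ᵥ (A.mulVec yt - b1) -
        2 * ((xt1 - xs) ⬝ᵥ (A.mulVec yt1 - b1)) +
        (xt2 - xs) ⬝ᵥ (A.mulVec yt2 - b1) -
        2 * ((xt - (2 : ℝ) • xt1 + xt2) ⬝ᵥ xs) / η1 -
        2 * ((xt1 - xt2) ⬝ᵥ b1) := by
  have S1 := step_S A b1 b2 xs η1 η2 hη1.ne' hη2.ne' xt yt xt1 yt1 hx1 hy1 hxs
  have S2 := step_S A b1 b2 xs η1 η2 hη1.ne' hη2.ne' xt1 yt1 xt2 yt2 hx2 hy2 hxs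
  have hexp : (xt - (2 : ℝ) • xt1 + xt2) ⬝ᵥ xs
      = (xt - xt1) ⬝ᵥ xs - (xt1 - xt2) ⬝ᵥ xs := by
    simp [sub_dotProduct, add_dotProduct, smul_dotProduct]
    ring
  have hb : (xt1 - xt2) ⬝ᵥ b1 = xt1 ⬝ᵥ b1 - xt2 ⬝ᵥ b1 := by
    simp [sub_dotProduct]
  rw [hexp, hb]
  have h1 : (xt ⬝ᵥ xt - 2 * (xt1 ⬝ᵥ xt1) + xt2 ⬝ᵥ xt2) / η1
      = (xt ⬝ᵥ xt - xt1 ⬝ᵥ xt1) / η1 - (xt1 ⬝ᵥ xt1 - xt2 ⬝ᵥ xt2) / η1 := by ring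
  have h2 : (yt ⬝ᵥ yt - 2 * (yt1 ⬝ᵥ yt1) + yt2 ⬝ᵥ yt2) / η2
      = (yt ⬝ᵥ yt - yt1 ⬝ᵥ yt1) / η2 - (yt1 ⬝ᵥ yt1 - yt2 ⬝ᵥ yt2) / η2 := by ring
  have h3 : 2 * ((xt - xt1) ⬝ᵥ xs - (xt1 - xt2) ⬝ᵥ xs) / η1
      = 2 * ((xt - xt1) ⬝ᵥ xs) / η1 - 2 * ((xt1 - xt2) ⬝ᵥ xs) / η1 := by ring
  rw [h1, h2, h3]
  linear_combination S2 - S1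
end

section
/- For two consecutive iterations of alternating gradient descent in a coordination game, the unknowns x* and b1 satisfy 0 = (‖x^t‖² - ‖x^{t+1}‖² - 2⟨x^t - x^{t+1}, x*⟩)/η₁ - (‖y^t‖² - ‖y^{t+1}‖²)/η₂ - 2⟨x^{t+1}, b1⟩ + 2⟨x*, b1⟩ + ⟨x^t - x*, Ay^t - b1⟩ - ⟨x^{t+1} - x*, Ay^{t+1} - b1⟩. -/
open Matrix

lemma dot_swap {k : ℕ} (M : Matrix (Fin k) (Fin k) ℝ) (a b : Fin k → ℝ) :
    a ⬝ᵥ (M *ᵥ b) = (Mᵀ *ᵥ a) ⬝ᵥ b := by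
  rw [Matrix.dotProduct_mulVec, ← Matrix.transpose_transpose M,
    Matrix.vecMul_transpose, Matrix.transpose_transpose]

/-- Coordination: nonlinear equation in (x*, b1) using only norms of agent 2's strategies. -/
theorem coord_nonlinear_equation_norm_y {k : ℕ} (A : Matrix (Fin k) (Fin k) ℝ)
    (b1 b2 : Fin k → ℝ) (η1 η2 : ℝ) (hη1 : 0 < η1) (hη2 : 0 < η2)
    (xt yt xt1 yt1 xs ys : Fin k → ℝ)
    (hx : xt1 = xt + η1 • (A.mulVec yt - b1))
    (hy : yt1 = yt + η2 • (Aᵀ.mulVec xt1 - b2))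
    (hxs : Aᵀ.mulVec xs = b2) (hys : A.mulVec ys = b1) :
    0 = (xt ⬝ᵥ xt - xt1 ⬝ᵥ xt1 - 2 * ((xt - xt1) ⬝ᵥ xs)) / η1 -
        (yt ⬝ᵥ yt - yt1 ⬝ᵥ yt1) / η2 -
        2 * (xt1 ⬝ᵥ b1) + 2 * (xs ⬝ᵥ b1) +
        (xt - xs) ⬝ᵥ (A.mulVec yt - b1) -
        (xt1 - xs) ⬝ᵥ (A.mulVec yt1 - b1) := by
  set u : Fin k → ℝ := A *ᵥ yt - b1 with hu
  set v : Fin k → ℝ := Aᵀ *ᵥ xt1 - b2 with hv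
  -- basic expansions
  have h1 : (xt ⬝ᵥ xt - xt1 ⬝ᵥ xt1 - 2 * ((xt - xt1) ⬝ᵥ xs)) / η1
      = -2 * (xt ⬝ᵥ u) - η1 * (u ⬝ᵥ u) + 2 * (u ⬝ᵥ xs) := by
    rw [hx, div_eq_iff (ne_of_gt hη1)]
    simp only [dotProduct_add, add_dotProduct, dotProduct_sub, sub_dotProduct,
      dotProduct_smul, smul_dotProduct, smul_eq_mul]
    rw [dotProduct_comm u xt]
    ring
  have h3 : (yt ⬝ᵥ yt - yt1 ⬝ᵥ yt1) / η2
      = -2 * (yt ⬝ᵥ v) - η2 * (v ⬝ᵥ v) := by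
    rw [hy, div_eq_iff (ne_of_gt hη2)]
    simp only [dotProduct_add, add_dotProduct, dotProduct_smul, smul_dotProduct,
      smul_eq_mul]
    rw [dotProduct_comm v yt]
    ring
  have h4 : xt1 ⬝ᵥ b1 = xt ⬝ᵥ b1 + η1 * (b1 ⬝ᵥ u) := by
    rw [hx]
    simp only [add_dotProduct, smul_dotProduct, smul_eq_mul]
    rw [dotProduct_comm u b1]
  have h5 : (xt - xs) ⬝ᵥ u = xt ⬝ᵥ u - u ⬝ᵥ xs := by
    rw [sub_dotProduct, dotProduct_comm xs u]
  have h6 : A *ᵥ yt1 - b1 = u + η2 • (A *ᵥ v) := by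
    rw [hy, mulVec_add, mulVec_smul, hu]
    abel
  have hAv : (xt1 - xs) ⬝ᵥ (A *ᵥ v) = v ⬝ᵥ v := by
    rw [dot_swap, mulVec_sub, hxs, ← hv]
  have h7 : (xt1 - xs) ⬝ᵥ (A *ᵥ yt1 - b1)
      = xt ⬝ᵥ u + η1 * (u ⬝ᵥ u) - u ⬝ᵥ xs + η2 * (v ⬝ᵥ v) := by
    rw [h6, dotProduct_add, dotProduct_smul, smul_eq_mul, hAv, hx]
    simp only [sub_dotProduct, add_dotProduct, smul_dotProduct, smul_eq_mul]
    linear_combination - dotProduct_comm xs u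
  have h8 : yt ⬝ᵥ v = xt ⬝ᵥ u + η1 * (u ⬝ᵥ u) + xt ⬝ᵥ b1 + η1 * (b1 ⬝ᵥ u)
      - u ⬝ᵥ xs - xs ⬝ᵥ b1 := by
    rw [hv, dotProduct_sub, dot_swap, transpose_transpose, ← hxs, dot_swap,
      transpose_transpose]
    have : A *ᵥ yt = u + b1 := by rw [hu]; abel
    rw [this, hx]
    simp only [add_dotProduct, dotProduct_add, dotProduct_smul, smul_eq_mul]
    linear_combination dotProduct_comm u xt + dotProduct_comm b1 xt -
      dotProduct_comm b1 xs
  rw [h1, h3, h4, h5, h7]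
  linear_combination (-2 : ℝ) * h8
end

section
/- For two consecutive iterations of alternating gradient descent in a zero-sum game, the unknown x* satisfies the linear equation 0 = (‖x^t‖² - ‖x^{t+1}‖²)/η₁ + 2⟨x^{t+1}, (x^{t+1} - x^t)/η₁⟩ - η₂‖-Aᵀ x^{t+1} - b2‖² + ⟨x^t - x*, Ay^t - b1⟩ - ⟨x^{t+1} - x*, Ay^{t+1} - b1⟩, which depends on agent 2 only through the gradient norm ‖-Aᵀ x^{t+1} - b2‖. -/
open Matrix

/-- Zero-sum: linear equation in x* using only the norm of agent 2's gradient. -/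
theorem zero_sum_linear_equation_grad_norm {k : ℕ} (A : Matrix (Fin k) (Fin k) ℝ)
    (b1 b2 : Fin k → ℝ) (η1 η2 : ℝ) (hη1 : 0 < η1) (hη2 : 0 < η2)
    (xt yt xt1 yt1 xs ys : Fin k → ℝ)
    (hx : xt1 = xt + η1 • (A.mulVec yt - b1))
    (hy : yt1 = yt + η2 • (-(Aᵀ.mulVec xt1) - b2))
    (hxs : -(Aᵀ.mulVec xs) = b2) (hys : A.mulVec ys = b1) :
    0 = (xt ⬝ᵥ xt - xt1 ⬝ᵥ xt1) / η1 +
        2 * (xt1 ⬝ᵥ (η1⁻¹ • (xt1 - xt))) -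
        η2 * ((-(Aᵀ.mulVec xt1) - b2) ⬝ᵥ (-(Aᵀ.mulVec xt1) - b2)) +
        (xt - xs) ⬝ᵥ (A.mulVec yt - b1) -
        (xt1 - xs) ⬝ᵥ (A.mulVec yt1 - b1) := by
  set g1 := A.mulVec yt - b1 with hg1
  set g2 := -(Aᵀ.mulVec xt1) - b2 with hg2
  have h1 : η1⁻¹ • (xt1 - xt) = g1 := by
    rw [hx]; simp [smul_smul, inv_mul_cancel₀ hη1.ne']
  have h2 : A.mulVec yt1 - b1 = g1 + η2 • A.mulVec g2 := by
    rw [hy, mulVec_add, mulVec_smul, hg1]; ring_nf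
  have h3 : (xt1 - xs) ⬝ᵥ A.mulVec g2 = -(g2 ⬝ᵥ g2) := by
    rw [dotProduct_mulVec, ← mulVec_transpose]
    have : Aᵀ.mulVec (xt1 - xs) = -g2 := by
      rw [mulVec_sub, hg2, ← hxs]; abel
    rw [this]; simp
  rw [h1, h2, hx]
  simp only [dotProduct_add, add_dotProduct, dotProduct_smul, smul_dotProduct,
    dotProduct_sub, sub_dotProduct, smul_eq_mul, h3]
  simp only [dotProduct_add, add_dotProduct, dotProduct_smul, smul_dotProduct,
    dotProduct_sub, sub_dotProduct, smul_eq_mul, hx] at h3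
  rw [dotProduct_comm g1 xt]
  field_simp
  linear_combination (η1 * η2) * h3
end

section
/- For two consecutive iterations of alternating gradient descent in a coordination game, the unknown x* satisfies the linear equation 0 = (‖x^t‖² - ‖x^{t+1}‖²)/η₁ + 2⟨x^{t+1}, (x^{t+1} - x^t)/η₁⟩ + η₂‖Aᵀ x^{t+1} - b2‖² + ⟨x^t - x*, Ay^t - b1⟩ - ⟨x^{t+1} - x*, Ay^{t+1} - b1⟩. -/
open Matrix

/-- Coordination: linear equation in x* using only the norm of agent 2's gradient. -/
theorem coord_linear_equation_grad_norm {k : ℕ} (A : Matrix (Fin k) (Fin k) ℝ)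
    (b1 b2 : Fin k → ℝ) (η1 η2 : ℝ) (hη1 : 0 < η1) (hη2 : 0 < η2)
    (xt yt xt1 yt1 xs ys : Fin k → ℝ)
    (hx : xt1 = xt + η1 • (A.mulVec yt - b1))
    (hy : yt1 = yt + η2 • (Aᵀ.mulVec xt1 - b2))
    (hxs : Aᵀ.mulVec xs = b2) (hys : A.mulVec ys = b1) :
    0 = (xt ⬝ᵥ xt - xt1 ⬝ᵥ xt1) / η1 +
        2 * (xt1 ⬝ᵥ (η1⁻¹ • (xt1 - xt))) +
        η2 * ((Aᵀ.mulVec xt1 - b2) ⬝ᵥ (Aᵀ.mulVec xt1 - b2)) +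
        (xt - xs) ⬝ᵥ (A.mulVec yt - b1) -
        (xt1 - xs) ⬝ᵥ (A.mulVec yt1 - b1) := by
  have key : ∀ v w : Fin k → ℝ, v ⬝ᵥ A.mulVec w = Aᵀ.mulVec v ⬝ᵥ w := by
    intro v w
    rw [Matrix.dotProduct_mulVec, ← Matrix.mulVec_transpose]
  set g := A.mulVec yt - b1 with hg
  set h := Aᵀ.mulVec xt1 - b2 with hh
  have hxt : xt = xt1 - η1 • g := by rw [hx]; abel
  have hy1 : A.mulVec yt1 - b1 = g + η2 • A.mulVec h := by
    rw [hy, Matrix.mulVec_add, Matrix.mulVec_smul, hg]; abel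
  have hAh : (xt1 - xs) ⬝ᵥ A.mulVec h = h ⬝ᵥ h := by
    rw [key, Matrix.mulVec_sub, hxs, ← hh]
  rw [hy1, hxt]
  have hne : η1 ≠ 0 := ne_of_gt hη1
  simp only [dotProduct_sub, sub_dotProduct, dotProduct_add, add_dotProduct,
    dotProduct_smul, smul_dotProduct, smul_eq_mul, sub_sub_cancel]
  rw [show xt1 ⬝ᵥ A.mulVec h = h ⬝ᵥ h + xs ⬝ᵥ A.mulVec h by
    have := hAh; simp only [sub_dotProduct] at this; linarith]
  rw [dotProduct_comm g xt1]
  field_simp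
  ring
end

section
/- Under alternating gradient descent in a zero-sum game, the quantity (‖y^t‖² - ‖y^{t+1}‖²)/η₂ equals 2⟨x^{t+1} - x*, (x^{t+1} - x^t)/η₁ + b1⟩ - η₂‖-Aᵀx^{t+1} - b2‖², where (x*, y*) is a Nash equilibrium. -/
open Matrix

/-- Zero-sum: (‖y^t‖² - ‖y^{t+1}‖²)/η₂ expressed via agent 1's data and the
norm of agent 2's gradient. -/
theorem zero_sum_norm_y_difference {k : ℕ} (A : Matrix (Fin k) (Fin k) ℝ)
    (b1 b2 : Fin k → ℝ) (η1 η2 : ℝ) (hη1 : 0 < η1) (hη2 : 0 < η2)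
    (xt yt xt1 yt1 xs ys : Fin k → ℝ)
    (hx : xt1 = xt + η1 • (A.mulVec yt - b1))
    (hy : yt1 = yt + η2 • (-(Aᵀ.mulVec xt1) - b2))
    (hxs : -(Aᵀ.mulVec xs) = b2) (hys : A.mulVec ys = b1) :
    (yt ⬝ᵥ yt - yt1 ⬝ᵥ yt1) / η2 =
      2 * ((xt1 - xs) ⬝ᵥ (η1⁻¹ • (xt1 - xt) + b1)) -
      η2 * ((-(Aᵀ.mulVec xt1) - b2) ⬝ᵥ (-(Aᵀ.mulVec xt1) - b2)) := by
  have hAs : Aᵀ.mulVec xs = -b2 := by rw [← hxs, neg_neg]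
  set g : Fin k → ℝ := -(Aᵀ.mulVec xt1) - b2 with hg
  have hstep : η1⁻¹ • (xt1 - xt) + b1 = A.mulVec yt := by
    rw [hx]
    have : xt + η1 • (A.mulVec yt - b1) - xt = η1 • (A.mulVec yt - b1) := by
      abel
    rw [this, smul_smul, inv_mul_cancel₀ (ne_of_gt hη1), one_smul]
    abel
  have hcross : (xt1 - xs) ⬝ᵥ A.mulVec yt = -(yt ⬝ᵥ g) := by
    rw [dotProduct_mulVec, ← mulVec_transpose]
    have h1 : Aᵀ.mulVec (xt1 - xs) = -g := by
      rw [Matrix.mulVec_sub, hAs, hg]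
      abel
    rw [h1, neg_dotProduct, dotProduct_comm]
  have hy1 : yt1 ⬝ᵥ yt1 = yt ⬝ᵥ yt + 2 * η2 * (yt ⬝ᵥ g) + η2 ^ 2 * (g ⬝ᵥ g) := by
    rw [hy]
    simp only [dotProduct_add, add_dotProduct, smul_dotProduct, dotProduct_smul,
      smul_eq_mul]
    rw [dotProduct_comm g yt]
    ring
  rw [hstep, hcross, hy1]
  field_simp
  ring
end
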